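/- Given any coinfinite primitive recursive set Y, there exists a coinfinite primitive recursive set X such that R_X <_pr R_Y and the pair (X,Y) does not satisfy the ♦-property. (In particular, given any total computable function F there is a coinfinite primitive recursive X with p_{\bar X}(n) ≥ F(n) for all n.) -/

import Mathlib

/-!
For the second claim, let `G` be the running maximum of `F` and `c` a program computing `G`. The
set of halting records `⟨n, k, G n⟩` of `c` (with `k` the least step bound at which `c` halts on
`n`) is primitive recursive, contains exactly one record per input, and each record is at least the
value it records; so its `n`-th element is at least `G n ≥ F n`. Take `X` to be its complement.

For the first claim, apply the second to `G j = A(p_{Ȳ}(j + 3))`, `A` the Ackermann diagonal, to get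
`Z`, and let `Xᶜ` be the subsequence of `Yᶜ` indexed by `Zᶜ`. Then `#(0^X)[t]` is the number of
elements of `Zᶜ` below `#(0^Y)[t]`, and since `A` dominates every primitive recursive function,
`#(0^X)[h s] + 2 < #(0^Y)[s]` for large `s`, for every primitive recursive `h`. A reduction
`R_A ≤_pr R_B` gives `#(0^A)[s] ≤ #(0^B)[h s] + 1` for a monotone primitive recursive `h`; this
rules out `R_Y ≤_pr R_X`, and, chaining two such reductions between consecutive values of the
second one, rules out the coincidences `#(0^{X'})[t] = #(0^{Y'})[t]` required by the ♦-property.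
-/

/-- The equivalence relation `R_X`: `x R_X y` iff both in `X` or `x = y`. -/
def REq (X : Set ℕ) (x y : ℕ) : Prop := (x ∈ X ∧ y ∈ X) ∨ x = y

/-- Primitive recursive reducibility between binary relations on ℕ. -/
def PrRed (R S : ℕ → ℕ → Prop) : Prop :=
  ∃ f : ℕ → ℕ, Primrec f ∧ ∀ x y, R x y ↔ S (f x) (f y)

/-- pr-bireducibility. -/
def PrEquiv (R S : ℕ → ℕ → Prop) : Prop := PrRed R S ∧ PrRed S R

/-- `X` is a primitive recursive set. -/
def PRSet (X : Set ℕ) : Prop :=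
  ∃ f : ℕ → Bool, Primrec f ∧ ∀ n, n ∈ X ↔ f n = true

/-- `#(0^X)[s]`: the number of elements of the complement of `X` that are `≤ s`. -/
noncomputable def zc (X : Set ℕ) (s : ℕ) : ℕ := {k | k ≤ s ∧ k ∉ X}.ncard

/-- The ♦-property for a pair of sets. -/
def DiamondProp (X Y : Set ℕ) : Prop :=
  ∃ X' Y' : Set ℕ, PRSet X' ∧ PRSet Y' ∧
    PrEquiv (REq X') (REq X) ∧ PrEquiv (REq Y') (REq Y) ∧
    ∀ s, ∃ t, s ≤ t ∧ zc X' t = zc Y' t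

/-- The increasing enumeration of the complement of `U`. -/
noncomputable def penum (U : Set ℕ) (n : ℕ) : ℕ := Nat.nth (fun k => k ∉ U) n

open Finset Nat.Partrec.Code
open Nat.Partrec (Code)
open Nat (count nth)

lemma prSet_iff_primrecPred {X : Set ℕ} : PRSet X ↔ PrimrecPred (· ∈ X) := by
  constructor
  · rintro ⟨f, hf, hX⟩
    exact (Primrec.eq.comp hf (Primrec.const true)).of_eq fun n => (hX n).symm
  · rintro ⟨_, h⟩
    exact ⟨_, h, fun n => by simp⟩

lemma Primrec.nat_count {p : ℕ → Prop} [DecidablePred p] (hp : PrimrecPred p) :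
    Primrec (count p) :=
  (Primrec.list_length.comp ((Primrec.listFilter hp).comp Primrec.list_range)).of_eq
    fun n => by simp [Nat.count, List.countP_eq_length_filter]

lemma Computable.nat_nth {p : ℕ → Prop} [DecidablePred p] (hp : PrimrecPred p)
    (hinf : {n | p n}.Infinite) : Computable (nth p) := by
  have hex : ∀ n, ∃ k, n < count p (k + 1) :=
    fun n => ⟨nth p n, (Nat.lt_nth_iff_count_lt hinf).2 (Nat.lt_succ_self _)⟩
  have hP : ComputablePred fun q : ℕ × ℕ => q.1 < count p (q.2 + 1) :=
    (Primrec.nat_lt.comp Primrec.fst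
      ((Primrec.nat_count hp).comp (Primrec.succ.comp Primrec.snd))).computablePred
  refine (Computable.find hP hex).of_eq fun n => le_antisymm
    (Nat.find_min' _ ((Nat.lt_nth_iff_count_lt hinf).2 (Nat.lt_succ_self _))) ?_
  exact Nat.lt_succ_iff.1 ((Nat.lt_nth_iff_count_lt hinf).1 (Nat.find_spec (hex n)))

lemma partialSups_eq_rec (f : ℕ → ℕ) (n : ℕ) :
    partialSups f n = Nat.rec (f 0) (fun k m => max m (f (k + 1))) n := by
  induction n with
  | zero => simp
  | succ n ih => simp [ih]

lemma Primrec.partialSups {f : ℕ → ℕ} (hf : Primrec f) : Primrec (partialSups f) :=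
  (Primrec.nat_rec₁ (f 0) (Primrec.nat_max.comp Primrec.snd
    (hf.comp (Primrec.succ.comp Primrec.fst))).to₂).of_eq fun n => (partialSups_eq_rec f n).symm

lemma Computable.partialSups {f : ℕ → ℕ} (hf : Computable f) : Computable (partialSups f) :=
  (Computable.nat_rec Computable.id (hf.comp (Computable.const 0))
    (Primrec.nat_max.to_comp.comp (Computable.snd.comp Computable.snd)
      (hf.comp (Computable.succ.comp (Computable.fst.comp Computable.snd)))).to₂).of_eq
    fun n => (partialSups_eq_rec f n).symm

lemma zc_eq_count (X : Set ℕ) [DecidablePred (· ∈ X)] (s : ℕ) :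
    zc X s = count (· ∉ X) (s + 1) := by
  rw [zc, Nat.count_eq_card_filter_range, ← Set.ncard_coe_finset]
  congr 1
  ext k
  simp

lemma zc_monotone (X : Set ℕ) : Monotone (zc X) := by
  classical
  intro a b hab
  simp only [zc_eq_count]
  exact Nat.count_monotone _ (by omega)

lemma zc_le_succ (X : Set ℕ) (s : ℕ) : zc X s ≤ s + 1 := by
  classical
  rw [zc_eq_count]
  exact Nat.count_le _

lemma zc_penum {Y : Set ℕ} (hY : Yᶜ.Infinite) (n : ℕ) : zc Y (penum Y n) = n + 1 := by
  classical
  rw [zc_eq_count]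
  exact Nat.count_nth_succ_of_infinite hY n

lemma le_nth_of_injOn {S : Set ℕ} (hS : S.Infinite) {ℓ G : ℕ → ℕ} (hℓ : S.InjOn ℓ)
    (hG : Monotone G) (hGℓ : ∀ s ∈ S, G (ℓ s) ≤ s) (n : ℕ) : G n ≤ nth (· ∈ S) n := by
  classical
  rw [← Nat.count_le_iff_le_nth (p := (· ∈ S)) hS, Nat.count_eq_card_filter_range]
  calc #{s ∈ range (G n) | s ∈ S} ≤ #(range n) := by
        refine card_le_card_of_injOn ℓ (fun s hs => ?_) (hℓ.mono fun s hs => (mem_filter.1 hs).2)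
        simp only [coe_filter, coe_range, mem_range, Set.mem_Iio, Set.mem_ofPred_eq] at hs ⊢
        by_contra! h
        exact (hG h).not_gt ((hGℓ s hs.2).trans_lt hs.1)
    _ = n := card_range n

/-- `Nat.pair n (Nat.pair k v)` belongs to `haltingRecords c` iff `c` halts on input `n` with
output `v` and `k` is the least bound for which `evaln` sees this. -/
def haltingRecords (c : Code) : Set ℕ :=
  {s | evaln s.unpair.2.unpair.1 c s.unpair.1 = some s.unpair.2.unpair.2 ∧
    evaln (s.unpair.2.unpair.1 - 1) c s.unpair.1 = none}

lemma pair_mem_haltingRecords {c : Code} {n k v : ℕ} :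
    Nat.pair n (Nat.pair k v) ∈ haltingRecords c ↔
      evaln k c n = some v ∧ evaln (k - 1) c n = none := by
  simp [haltingRecords]

lemma exists_eq_pair (s : ℕ) : ∃ n k v, s = Nat.pair n (Nat.pair k v) :=
  ⟨s.unpair.1, s.unpair.2.unpair.1, s.unpair.2.unpair.2, by simp⟩

lemma primrecPred_haltingRecords (c : Code) : PrimrecPred (· ∈ haltingRecords c) := by
  have hn : Primrec fun s : ℕ => s.unpair.1 := Primrec.fst.comp Primrec.unpair
  have hk : Primrec fun s : ℕ => s.unpair.2.unpair.1 :=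
    Primrec.fst.comp (Primrec.unpair.comp (Primrec.snd.comp Primrec.unpair))
  have hv : Primrec fun s : ℕ => s.unpair.2.unpair.2 :=
    Primrec.snd.comp (Primrec.unpair.comp (Primrec.snd.comp Primrec.unpair))
  exact PrimrecPred.and
    (Primrec.eq.comp (primrec_evaln.comp ((hk.pair (Primrec.const c)).pair hn))
      (Primrec.option_some.comp hv))
    (Primrec.eq.comp (primrec_evaln.comp
      (((Primrec.nat_sub.comp hk (Primrec.const 1)).pair (Primrec.const c)).pair hn))
      (Primrec.const none))

lemma eq_of_pair_mem_haltingRecords {c : Code} {n k v k' v' : ℕ}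
    (h : Nat.pair n (Nat.pair k v) ∈ haltingRecords c)
    (h' : Nat.pair n (Nat.pair k' v') ∈ haltingRecords c) : k = k' ∧ v = v' := by
  rw [pair_mem_haltingRecords] at h h'
  have hk : ∀ {k k' v : ℕ}, evaln k c n = some v → evaln (k' - 1) c n = none → ¬ k < k' :=
    fun hv hnone hlt => by
      simpa [hnone] using evaln_mono (Nat.le_sub_one_of_lt hlt) (Option.mem_def.2 hv)
  obtain rfl : k = k' := by
    have := hk h.1 h'.2
    have := hk h'.1 h.2
    omega
  exact ⟨rfl, Option.some_injective _ (h.1.symm.trans h'.1)⟩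

lemma haltingRecords_injOn_fst (c : Code) : (haltingRecords c).InjOn fun s => s.unpair.1 := by
  intro s hs s' hs' hss'
  obtain ⟨n, k, v, rfl⟩ := exists_eq_pair s
  obtain ⟨n', k', v', rfl⟩ := exists_eq_pair s'
  obtain rfl : n = n' := by simpa using hss'
  obtain ⟨rfl, rfl⟩ := eq_of_pair_mem_haltingRecords hs hs'
  rfl

lemma exists_pair_mem_haltingRecords {c : Code} {n v : ℕ} (h : v ∈ eval c n) :
    ∃ k, Nat.pair n (Nat.pair k v) ∈ haltingRecords c := by
  classical
  have hk : ∃ k, v ∈ evaln k c n := evaln_complete.1 h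
  refine ⟨Nat.find hk, pair_mem_haltingRecords.2 ⟨Nat.find_spec hk, ?_⟩⟩
  rcases hw : evaln (Nat.find hk - 1) c n with _ | w
  · rfl
  · have hpos : 0 < Nat.find hk := Nat.zero_lt_of_lt (evaln_bound (Nat.find_spec hk))
    obtain rfl : w = v := Part.mem_unique (evaln_sound (Option.mem_def.2 hw)) h
    exact absurd (Nat.find_min' hk (Option.mem_def.2 hw)) (by omega)

lemma mem_eval_of_pair_mem_haltingRecords {c : Code} {n k v : ℕ}
    (h : Nat.pair n (Nat.pair k v) ∈ haltingRecords c) : v ∈ eval c n :=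
  evaln_sound (Option.mem_def.2 (pair_mem_haltingRecords.1 h).1)

theorem exists_prSet_forall_le_penum {F : ℕ → ℕ} (hF : Computable F) :
    ∃ X : Set ℕ, PRSet X ∧ Xᶜ.Infinite ∧ ∀ n, F n ≤ penum X n := by
  set G := partialSups F
  obtain ⟨c, hc⟩ : ∃ c : Code, eval c = fun n => Part.some (G n) :=
    exists_code.1 (Partrec.nat_iff.1 (Computable.partialSups hF))
  have hrec : ∀ n, ∃ k, Nat.pair n (Nat.pair k (G n)) ∈ haltingRecords c :=
    fun n => exists_pair_mem_haltingRecords (by simp [hc])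
  have hinf : (haltingRecords c).Infinite := by
    refine Set.infinite_of_injective_forall_mem (f := fun n => Nat.pair n (Nat.pair _ (G n)))
      (fun n n' h => ?_) fun n => (hrec n).choose_spec
    simpa using congrArg (fun s => s.unpair.1) h
  have hle : ∀ s ∈ haltingRecords c, G s.unpair.1 ≤ s := by
    intro s hs
    obtain ⟨n, k, v, rfl⟩ := exists_eq_pair s
    have : v = G n := by simpa [hc] using mem_eval_of_pair_mem_haltingRecords hs
    simpa [this] using (Nat.right_le_pair k (G n)).trans (Nat.right_le_pair n _)
  refine ⟨(haltingRecords c)ᶜ, prSet_iff_primrecPred.2 (primrecPred_haltingRecords c).not,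
    by rwa [compl_compl], fun n => ?_⟩
  calc F n ≤ G n := le_partialSups F n
    _ ≤ nth (· ∈ haltingRecords c) n :=
      le_nth_of_injOn hinf (haltingRecords_injOn_fst c) (partialSups F).monotone hle n
    _ = penum (haltingRecords c)ᶜ n := by simp [penum]

lemma Nat.count_and_count (p q : ℕ → Prop) [DecidablePred p] [DecidablePred q] (t : ℕ) :
    count (fun s => p s ∧ q (count p s)) t = count q (count p t) := by
  induction t with
  | zero => simp
  | succ t ih =>
    by_cases hp : p t <;> by_cases hq : q (count p t) <;> simp [Nat.count_succ, hp, hq, ih]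

lemma REq.eq_of_left_notMem {A : Set ℕ} {x y : ℕ} (h : REq A x y) (hx : x ∉ A) : x = y :=
  h.resolve_left fun hxy => hx hxy.1

lemma prRed_REq_compl {S Y : Set ℕ} (hS : PrimrecPred (· ∈ S)) (hSY : S ⊆ Yᶜ) {c : ℕ}
    (hcY : c ∉ Y) (hcS : c ∉ S) : PrRed (REq Sᶜ) (REq Y) := by
  classical
  refine ⟨fun x => if x ∈ S then x else c, Primrec.ite hS Primrec.id (Primrec.const c),
    fun x y => ?_⟩
  simp only [REq]
  split_ifs <;> grind

section Thinning

variable {Y Z : Set ℕ}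

lemma mem_penum_image_iff [DecidablePred (· ∈ Y)] (hY : Yᶜ.Infinite) {s : ℕ} :
    s ∈ penum Y '' Zᶜ ↔ s ∉ Y ∧ count (· ∉ Y) s ∉ Z := by
  constructor
  · rintro ⟨m, hm, rfl⟩
    exact ⟨Nat.nth_mem_of_infinite hY m, by rwa [penum, Nat.count_nth_of_infinite hY]⟩
  · rintro ⟨hsY, hsZ⟩
    exact ⟨_, hsZ, Nat.nth_count hsY⟩

lemma primrecPred_penum_image (hY : PRSet Y) (hYc : Yᶜ.Infinite) (hZ : PRSet Z) :
    PrimrecPred (· ∈ penum Y '' Zᶜ) := by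
  classical
  rw [prSet_iff_primrecPred] at hY hZ
  exact (hY.not.and (hZ.comp (Primrec.nat_count hY.not)).not).of_eq
    fun s => (mem_penum_image_iff hYc).symm

lemma prSet_compl_penum_image (hY : PRSet Y) (hYc : Yᶜ.Infinite) (hZ : PRSet Z) :
    PRSet (penum Y '' Zᶜ)ᶜ :=
  prSet_iff_primrecPred.2 (primrecPred_penum_image hY hYc hZ).not

lemma infinite_compl_compl_penum_image (hYc : Yᶜ.Infinite) (hZc : Zᶜ.Infinite) :
    (penum Y '' Zᶜ)ᶜᶜ.Infinite := by
  rw [compl_compl]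
  exact hZc.image (Nat.nth_injective hYc).injOn

lemma prRed_REq_compl_penum_image (hY : PRSet Y) (hYc : Yᶜ.Infinite) (hZ : PRSet Z)
    (h0Z : 0 ∈ Z) : PrRed (REq (penum Y '' Zᶜ)ᶜ) (REq Y) := by
  refine prRed_REq_compl (primrecPred_penum_image hY hYc hZ) ?_
    (Nat.nth_mem_of_infinite hYc 0) ?_
  · rintro _ ⟨m, -, rfl⟩
    exact Nat.nth_mem_of_infinite hYc m
  · rintro ⟨m, hm, hm0⟩
    exact hm (Nat.nth_injective hYc hm0 ▸ h0Z)

lemma zc_compl_penum_image [DecidablePred (· ∈ Z)] (hY : Yᶜ.Infinite) (t : ℕ) :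
    zc (penum Y '' Zᶜ)ᶜ t = count (· ∉ Z) (zc Y t) := by
  classical
  simp only [zc_eq_count, Set.notMem_compl_iff, mem_penum_image_iff hY]
  convert Nat.count_and_count (· ∉ Y) (· ∉ Z) (t + 1)

end Thinning

/-- The `+ 2` absorbs the `+ 1` errors of the two reductions in `not_diamondProp_of_prSparser`. -/
def PrSparser (X Y : Set ℕ) : Prop :=
  ∀ h : ℕ → ℕ, Primrec h → ∀ᶠ s in Filter.atTop, zc X (h s) + 2 < zc Y s

theorem prSparser_compl_penum_image {Y Z : Set ℕ} (hY : Yᶜ.Infinite) (hZ : Zᶜ.Infinite)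
    (hYZ : ∀ j, ack (penum Y (j + 3)) (penum Y (j + 3)) ≤ penum Z j) :
    PrSparser (penum Y '' Zᶜ)ᶜ Y := by
  classical
  intro h hh
  obtain ⟨m, hm⟩ := exists_lt_ack_of_nat_primrec (Primrec.nat_iff.1 (Primrec.partialSups hh))
  refine Filter.eventually_atTop.2 ⟨penum Y (m + 3), fun s hs => ?_⟩
  have hmb : m + 3 < zc Y s := by
    rw [zc_eq_count]
    exact (Nat.lt_nth_iff_count_lt hY).2 (Nat.lt_succ_of_le hs)
  set b := zc Y s
  have hsb : s + 1 ≤ penum Y b := (Nat.count_le_iff_le_nth hY).1 (zc_eq_count Y s).ge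
  have hbZ : zc Y (h s) ≤ penum Z (b - 3) :=
    calc zc Y (h s) ≤ h s + 1 := zc_le_succ Y (h s)
      _ ≤ partialSups h (penum Y b) + 1 :=
        Nat.succ_le_succ (le_partialSups_of_le h (by omega))
      _ ≤ ack m (penum Y b) := hm _
      _ ≤ ack (penum Y b) (penum Y b) :=
        ack_le_ack ((show m ≤ b by omega).trans (Nat.nth_strictMono hY).le_apply) le_rfl
      _ ≤ penum Z (b - 3) := by simpa [Nat.sub_add_cancel (show 3 ≤ b by omega)] using hYZ (b - 3)
  rw [zc_compl_penum_image hY]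
  have := (Nat.count_le_iff_le_nth hZ).2 hbZ
  omega

lemma exists_monotone_zc_le_of_prRed {A B : Set ℕ} (hAB : PrRed (REq A) (REq B)) :
    ∃ h : ℕ → ℕ, Primrec h ∧ Monotone h ∧ ∀ s, zc A s ≤ zc B (h s) + 1 := by
  classical
  obtain ⟨f, hf, hfAB⟩ := hAB
  refine ⟨partialSups f, Primrec.partialSups hf, (partialSups f).monotone, fun s => ?_⟩
  set T := {k ∈ range (s + 1) | k ∉ A}
  have hT : ∀ k ∈ T, k ∉ A := fun k hk => (mem_filter.1 hk).2
  have hinj : Set.InjOn f T := fun k hk k' _ hkk' =>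
    ((hfAB k k').2 (Or.inr hkk')).eq_of_left_notMem (hT k hk)
  have hB : #{k ∈ T | f k ∈ B} ≤ 1 := by
    refine card_le_one.2 fun k hk k' hk' => ?_
    rw [mem_filter] at hk hk'
    exact ((hfAB k k').2 (Or.inl ⟨hk.2, hk'.2⟩)).eq_of_left_notMem (hT k hk.1)
  have hBc : #{k ∈ T | f k ∉ B} ≤ zc B (partialSups f s) := by
    rw [zc_eq_count, Nat.count_eq_card_filter_range]
    refine card_le_card_of_injOn f (fun k hk => ?_) (hinj.mono fun k hk => (mem_filter.1 hk).1)
    simp only [coe_filter, mem_filter, mem_range, Set.mem_ofPred_eq, T] at hk ⊢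
    exact ⟨Nat.lt_succ_of_le (le_partialSups_of_le f (by omega)), hk.2⟩
  calc zc A s = #T := by rw [zc_eq_count, Nat.count_eq_card_filter_range]
    _ = #{k ∈ T | f k ∈ B} + #{k ∈ T | f k ∉ B} := (card_filter_add_card_filter_not _).symm
    _ ≤ zc B (partialSups f s) + 1 := by omega

theorem not_prRed_of_prSparser {X Y : Set ℕ} (hXY : PrSparser X Y) : ¬PrRed (REq Y) (REq X) := by
  intro hYX
  obtain ⟨h, hh, -, hle⟩ := exists_monotone_zc_le_of_prRed hYX
  obtain ⟨s, hs⟩ := (hXY h hh).exists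
  have := hle s
  omega

lemma exists_le_apply_le_lt_apply_succ {f : ℕ → ℕ} (hf : Monotone f) {s₀ t : ℕ} (h₀ : f s₀ ≤ t)
    (ht : ∃ u, t < f u) : ∃ s, s₀ ≤ s ∧ f s ≤ t ∧ t < f (s + 1) := by
  classical
  have hs₀ : s₀ < Nat.find ht := by
    by_contra! h
    exact (Nat.find_spec ht).not_ge ((hf h).trans h₀)
  refine ⟨Nat.find ht - 1, by omega, not_lt.1 (Nat.find_min ht (by omega)), ?_⟩
  simpa [Nat.sub_add_cancel (show 1 ≤ Nat.find ht by omega)] using Nat.find_spec ht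

theorem not_diamondProp_of_prSparser {X Y : Set ℕ} (hY : Yᶜ.Infinite) (hXY : PrSparser X Y) :
    ¬DiamondProp X Y := by
  rintro ⟨X', Y', -, -, hX, hY', hdiamond⟩
  obtain ⟨h₁, hh₁, h₁mono, h₁le⟩ := exists_monotone_zc_le_of_prRed hX.1
  obtain ⟨h₂, hh₂, h₂mono, h₂le⟩ := exists_monotone_zc_le_of_prRed hY'.2
  obtain ⟨s₀, hs₀⟩ := Filter.eventually_atTop.1
    (hXY (fun s => h₁ (h₂ (s + 1))) (hh₁.comp (hh₂.comp Primrec.succ)))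
  obtain ⟨t, ht, hzc⟩ := hdiamond (h₂ s₀)
  have h₂unbdd : ∃ u, t < h₂ u := ⟨penum Y (t + 2), by
    have := h₂le (penum Y (t + 2))
    have := zc_le_succ Y' (h₂ (penum Y (t + 2)))
    rw [zc_penum hY] at *
    omega⟩
  obtain ⟨s, hs, hst, hts⟩ := exists_le_apply_le_lt_apply_succ h₂mono ht h₂unbdd
  have := hs₀ s hs
  have := h₂le s
  have := zc_monotone Y' hst
  have := h₁le t
  have := zc_monotone X (h₁mono hts.le)
  omega

theorem stmt_17 :
    (∀ Y : Set ℕ, PRSet Y → Yᶜ.Infinite →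
      ∃ X : Set ℕ, PRSet X ∧ Xᶜ.Infinite ∧
        PrRed (REq X) (REq Y) ∧ ¬ PrRed (REq Y) (REq X) ∧ ¬ DiamondProp X Y) ∧
    (∀ F : ℕ → ℕ, Computable F →
      ∃ X : Set ℕ, PRSet X ∧ Xᶜ.Infinite ∧ ∀ n, F n ≤ penum X n) := by
  refine ⟨fun Y hY hYc => ?_, fun F hF => exists_prSet_forall_le_penum hF⟩
  classical
  have hpY : Computable fun j => penum Y (j + 3) :=
    (Computable.nat_nth (prSet_iff_primrecPred.1 hY).not hYc).comp
      (Primrec.to_comp (Primrec.nat_add.comp Primrec.id (Primrec.const 3)))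
  obtain ⟨Z, hZ, hZc, hYZ⟩ := exists_prSet_forall_le_penum (computable₂_ack.comp hpY hpY)
  have h0Z : 0 ∈ Z := by
    by_contra h0
    simpa [penum, Nat.nth_zero_of_zero (p := (· ∉ Z)) h0] using (ack_pos _ _).trans_le (hYZ 0)
  have hsparse := prSparser_compl_penum_image hYc hZc hYZ
  exact ⟨(penum Y '' Zᶜ)ᶜ, prSet_compl_penum_image hY hYc hZ,
    infinite_compl_compl_penum_image hYc hZc, prRed_REq_compl_penum_image hY hYc hZ h0Z,
    not_prRed_of_prSparser hsparse, not_diamondProp_of_prSparser hYc hsparse⟩
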